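/- A standardized maximin T-optimal discriminating design on [-1,1] for constant versus quadratic regression with respect to B = [-d, d], 0 < d ≤ 1/2, places masses (1+d^2)/4, (1-d^2)/2, (1+d^2)/4 at the points -1, 0, 1; i.e., this design ξ* maximizes inf_{b ∈ [-d,d]} T(ξ,(b,1))/R̄(b) over all symmetric probability measures ξ on {-1,0,1}. -/
import Mathlib


/-- `R̄(b)`: squared minimal Chebyshev deviation for the quadratic case. -/
noncomputable def Rbar (b : ℝ) : ℝ := if |b| ≤ 2 then (1/4)*(1 + |b|/2)^4 else b^2

/-- `T(ξ_h,(b,1))` for the symmetric three-point design with masses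
`(1-h)/2, h, (1-h)/2` at `-1, 0, 1`. -/
noncomputable def Tdes (h b : ℝ) : ℝ :=
  sInf (Set.range fun c : ℝ =>
    ((1 - h)/2) * ((-1:ℝ)^2 + b * (-1) - c)^2
      + h * ((0:ℝ)^2 + b * 0 - c)^2
      + ((1 - h)/2) * ((1:ℝ)^2 + b * 1 - c)^2)

lemma Tdes_eq (h b : ℝ) : Tdes h b = (1 - h) * (h + b^2) := by
  have hfun : (fun c : ℝ =>
      ((1 - h)/2) * ((-1:ℝ)^2 + b * (-1) - c)^2
        + h * ((0:ℝ)^2 + b * 0 - c)^2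
        + ((1 - h)/2) * ((1:ℝ)^2 + b * 1 - c)^2)
      = fun c : ℝ => (c - (1 - h))^2 + (1 - h) * (h + b^2) := by
    funext c; ring
  rw [Tdes, hfun]
  apply le_antisymm
  · apply csInf_le
    · exact ⟨(1 - h) * (h + b^2), by rintro x ⟨c, rfl⟩; dsimp only; nlinarith [sq_nonneg (c - (1-h))]⟩
    · exact ⟨1 - h, by ring⟩
  · apply le_csInf (Set.range_nonempty _)
    rintro x ⟨c, rfl⟩; dsimp only; nlinarith [sq_nonneg (c - (1-h))]

lemma Rbar_eq {b : ℝ} (hb : |b| ≤ 2) : Rbar b = (1/4)*(1 + |b|/2)^4 := by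
  rw [Rbar, if_pos hb]

lemma Rbar_pos {b : ℝ} (hb : |b| ≤ 2) : 0 < Rbar b := by
  rw [Rbar_eq hb]
  have := abs_nonneg b
  positivity

/-- For `0 < d ≤ 1/2`, the symmetric three-point design with
masses `(1+d²)/4, (1-d²)/2, (1+d²)/4` at `-1, 0, 1` (i.e., `h* = (1-d²)/2`)
maximizes the standardized maximin T-criterion
`inf_{b∈[-d,d]} T(ξ,(b,1))/R̄(b)` over all symmetric designs on `{-1,0,1}`. -/
theorem standardized_maximin_optimal_small_d (d : ℝ) (hd0 : 0 < d)
    (hd : d ≤ 1/2) :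
    ((1 - d^2)/2 ∈ Set.Icc (0:ℝ) 1) ∧
    (1 - (1 - d^2)/2)/2 = (1 + d^2)/4 ∧
    (∀ h ∈ Set.Icc (0:ℝ) 1,
      sInf ((fun b => Tdes h b / Rbar b) '' Set.Icc (-d) d) ≤
        sInf ((fun b => Tdes ((1 - d^2)/2) b / Rbar b) '' Set.Icc (-d) d)) := by
  refine ⟨⟨by nlinarith, by nlinarith⟩, by ring, ?_⟩
  intro h hh
  obtain ⟨hh0, hh1⟩ := hh
  set hs : ℝ := (1 - d^2)/2 with hhs
  have habs : ∀ b ∈ Set.Icc (-d) d, |b| ≤ 2 := by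
    intro b hb
    have : |b| ≤ d := abs_le.2 ⟨hb.1, hb.2⟩
    linarith
  have hdmem : d ∈ Set.Icc (-d) d := ⟨by linarith, le_refl d⟩
  -- key pointwise inequality
  have key : ∀ b ∈ Set.Icc (-d) d,
      Tdes h d / Rbar d ≤ Tdes hs b / Rbar b := by
    intro b hb
    have hbd : |b| ≤ d := abs_le.2 ⟨hb.1, hb.2⟩
    have hb2 : |b| ≤ 2 := by linarith
    have hd2 : |d| ≤ 2 := by rw [abs_of_pos hd0]; linarith
    rw [Tdes_eq, Tdes_eq, div_le_div_iff₀ (Rbar_pos hd2) (Rbar_pos hb2),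
      Rbar_eq hb2, Rbar_eq hd2, abs_of_pos hd0]
    have hb0 : 0 ≤ |b| := abs_nonneg b
    have hbsq : b^2 = |b|^2 := (sq_abs b).symm
    rw [hbsq]
    set t := |b|
    have h1 : (1 - h) * (h + d^2) ≤ (1 - hs) * (hs + d^2) := by
      rw [hhs]; nlinarith [sq_nonneg (h - (1 - d^2)/2)]
    have h2 : (1 - hs) * (hs + d^2) * ((1/4)*(1 + t/2)^4) ≤
        (1 - hs) * (hs + t^2) * ((1/4)*(1 + d/2)^4) := by
      rw [hhs]
      have hQ : (0:ℝ) ≤ 32 - 8*d - 24*d^2 - 23*d^3 - 8*d^4 - d^5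
          + t*(-8 - 56*d - 23*d^2 - 8*d^3 - d^4)
          + t^2*(8 + d + 8*d^2 + d^3) + t^3*(1 + d^2) := by
        nlinarith [mul_nonneg (sub_nonneg.2 hbd) (sub_nonneg.2 hd), sq_nonneg (d - t),
          sq_nonneg (1 - 2*d), sq_nonneg (1 - 2*t), mul_nonneg hb0 (sub_nonneg.2 hbd),
          mul_nonneg (sub_nonneg.2 hbd) (sq_nonneg (1-2*d)),
          mul_nonneg hb0 (sq_nonneg (1-2*d)), sq_nonneg (d+t), mul_nonneg hb0 hb0]
      have hP : (0:ℝ) ≤ (1 + d^2) * ((d - t) * (32 - 8*d - 24*d^2 - 23*d^3 - 8*d^4 - d^5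
          + t*(-8 - 56*d - 23*d^2 - 8*d^3 - d^4)
          + t^2*(8 + d + 8*d^2 + d^3) + t^3*(1 + d^2))) :=
        mul_nonneg (by positivity) (mul_nonneg (sub_nonneg.2 hbd) hQ)
      nlinarith [hP]
    have hR : (0:ℝ) ≤ (1/4)*(1 + t/2)^4 := by positivity
    calc (1 - h) * (h + d^2) * ((1/4)*(1 + t/2)^4)
        ≤ (1 - hs) * (hs + d^2) * ((1/4)*(1 + t/2)^4) :=
          mul_le_mul_of_nonneg_right h1 hR
      _ ≤ (1 - hs) * (hs + t^2) * ((1/4)*(1 + d/2)^4) := h2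
  have hbdd : BddBelow ((fun b => Tdes h b / Rbar b) '' Set.Icc (-d) d) := by
    refine ⟨0, ?_⟩
    rintro x ⟨b, hb, rfl⟩
    have hb2 := habs b hb
    have hT : 0 ≤ Tdes h b := by
      rw [Tdes_eq]; nlinarith [sq_nonneg b]
    exact div_nonneg hT (Rbar_pos hb2).le
  have step1 : sInf ((fun b => Tdes h b / Rbar b) '' Set.Icc (-d) d) ≤
      Tdes h d / Rbar d :=
    csInf_le hbdd ⟨d, hdmem, rfl⟩
  have step2 : Tdes h d / Rbar d ≤
      sInf ((fun b => Tdes hs b / Rbar b) '' Set.Icc (-d) d) := by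
    refine le_csInf ⟨Tdes hs d / Rbar d, ⟨d, hdmem, rfl⟩⟩ ?_
    rintro x ⟨b, hb, rfl⟩
    exact key b hb
  linarith
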